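/- Let X ⊆ ℕ and M(X) = ⟨a,b,c,d,e | a bⁱ c = a bⁱ d (i ∈ X), a bʲ c = a bʲ e (j ∉ X)⟩. Then for every n ∈ ℕ: n ∈ X if and only if a bⁿ c = a bⁿ d holds in M(X). Consequently, if the word problem for M(X) is decidable then X is a recursive (computable) subset of ℕ. -/

import Mathlib

/-- The element of the monoid `M` represented by the word `w` over the alphabet `A`,
where `f : A → M` interprets the letters. -/
def wordProd {A M : Type*} [Monoid M] (f : A → M) (w : List A) : M := (w.map f).prod

/-- One application of a defining relation from `R`: replace a factor `s` by `t`
where `(s, t) ∈ R` or `(t, s) ∈ R`. -/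
def OneStep {A : Type*} (R : Set (List A × List A)) (w w' : List A) : Prop :=
  ∃ u s t v : List A, ((s, t) ∈ R ∨ (t, s) ∈ R) ∧ w = u ++ s ++ v ∧ w' = u ++ t ++ v

/-- `⟨A | R⟩` (via `f : A → M`) is a presentation of `M`: `f` generates `M` (every element
is represented by a word) and two words represent the same element of `M` exactly when
they are related by the congruence generated by `R`. -/
def Presents {A M : Type*} [Monoid M] (f : A → M) (R : Set (List A × List A)) : Prop :=
  Function.Surjective (wordProd f) ∧
    ∀ u v : List A, Relation.ReflTransGen (OneStep R) u v ↔ wordProd f u = wordProd f v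

/-- An atomic homotopy in the directed 2-complex `K_n` of the right Cayley graph of `M`
over `A`: a path in the Cayley graph starting at `x` and labelled `u ++ s ++ v` is replaced
by the path labelled `u ++ t ++ v`, where the subpaths labelled `s` and `t` starting at the
vertex `x * (u)` are parallel (same endpoints) and `|s| + |t| ≤ n`, i.e. they form a
2-cell of `K_n`. -/
def KStep {A M : Type*} [Monoid M] (f : A → M) (n : ℕ) (p q : M × List A) : Prop :=
  ∃ (x : M) (u s t v : List A),
    p = (x, u ++ s ++ v) ∧ q = (x, u ++ t ++ v) ∧
    x * wordProd f u * wordProd f s = x * wordProd f u * wordProd f t ∧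
    s.length + t.length ≤ n

/-- Two paths in the right Cayley graph (given as a start vertex together with a label
word over `A`) are homotopic in `K_n` if one can be transformed into the other by a finite
sequence of 2-cell replacements. -/
def Homotopic {A M : Type*} [Monoid M] (f : A → M) (n : ℕ) :
    M × List A → M × List A → Prop :=
  Relation.ReflTransGen (KStep f n)

/-- The right Cayley graph of `M` over `A` is `n`-quasi-simply-connected: every pair of
parallel paths (same start vertex `x`, same end vertex) is homotopic in `K_n`. -/
def NQSC {A M : Type*} [Monoid M] (f : A → M) (n : ℕ) : Prop :=
  ∀ (x : M) (w₁ w₂ : List A), x * wordProd f w₁ = x * wordProd f w₂ →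
    Homotopic f n (x, w₁) (x, w₂)

/-! The monoids `M(X)`. The alphabet `{a, b, c, d, e}` is modelled by `Fin 5`, with
`a = 0`, `b = 1`, `c = 2`, `d = 3`, `e = 4`. -/

/-- The word `a bⁱ c`. -/
def wABC (i : ℕ) : List (Fin 5) := 0 :: (List.replicate i 1 ++ [2])

/-- The word `a bⁱ d`. -/
def wABD (i : ℕ) : List (Fin 5) := 0 :: (List.replicate i 1 ++ [3])

/-- The word `a bⁱ e`. -/
def wABE (i : ℕ) : List (Fin 5) := 0 :: (List.replicate i 1 ++ [4])

/-- The defining relations of `M(X)`: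
`a bⁱ c = a bⁱ d` for `i ∈ X` and `a bʲ c = a bʲ e` for `j ∉ X`. -/
def MXRel (X : Set ℕ) : Set (List (Fin 5) × List (Fin 5)) :=
  {p | ∃ i : ℕ, (i ∈ X ∧ p = (wABC i, wABD i)) ∨ (i ∉ X ∧ p = (wABC i, wABE i))}

/-- One step of the rewriting system for `M(X)`:
`a bⁱ c → a bⁱ d` for `i ∈ X`, and `a bʲ c → a bʲ e` for `j ∉ X`. -/
def RWStep (X : Set ℕ) (w w' : List (Fin 5)) : Prop :=
  ∃ (u v : List (Fin 5)) (i : ℕ),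
    (i ∈ X ∧ w = u ++ wABC i ++ v ∧ w' = u ++ wABD i ++ v) ∨
    (i ∉ X ∧ w = u ++ wABC i ++ v ∧ w' = u ++ wABE i ++ v)

/-- The normal forms: words over `{a,b,c,d,e}` containing no factor `a bⁱ c`. -/
def MXNormal (w : List (Fin 5)) : Prop :=
  ¬∃ (u v : List (Fin 5)) (i : ℕ), w = u ++ wABC i ++ v

/-!
If `n ∈ X`, then `a bⁿ c = a bⁿ d` is a defining relation. Conversely, let words act on
`Option ℕ × Prop` from right to left, recording whether the suffix read so far is `bᵏ c`
and raising a flag on every `d` and on every factor `a bⁱ c` with `i ∈ X`. This action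
respects the defining relations, so it factors through `M(X)`; starting from a lowered
flag, `a bⁿ c` raises it only if `n ∈ X` whereas `a bⁿ d` always does. Deciding `n ∈ X` thus
reduces to the word problem on the computable pair `(a bⁿ c, a bⁿ d)`.
-/

section Presentation

variable {A M N : Type*} [Monoid M] [Monoid N]

theorem wordProd_append (g : A → N) (u v : List A) :
    wordProd g (u ++ v) = wordProd g u * wordProd g v := by
  simp [wordProd]

theorem wordProd_eq_of_reflTransGen_oneStep (g : A → N) {R : Set (List A × List A)}
    (hR : ∀ p ∈ R, wordProd g p.1 = wordProd g p.2) {u v : List A}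
    (h : Relation.ReflTransGen (OneStep R) u v) : wordProd g u = wordProd g v := by
  induction h with
  | refl => rfl
  | tail _ hstep ih =>
    obtain ⟨u, s, t, v, hst, rfl, rfl⟩ := hstep
    have hst : wordProd g s = wordProd g t := hst.elim (hR _) fun h => (hR _ h).symm
    rw [ih]
    simp only [wordProd_append, hst]

section EndAction

variable {S : Type*} (g : A → Function.End S)

@[simp]
theorem wordProd_nil_apply (q : S) : wordProd g [] q = q := rfl

@[simp]
theorem wordProd_cons_apply (x : A) (w : List A) (q : S) :
    wordProd g (x :: w) q = g x (wordProd g w q) := rfl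

@[simp]
theorem wordProd_append_apply (u v : List A) (q : S) :
    wordProd g (u ++ v) q = wordProd g u (wordProd g v q) := by
  rw [wordProd_append]
  rfl

end EndAction

variable {f : A → M} {R : Set (List A × List A)}

theorem Presents.wordProd_eq_of_mem (hf : Presents f R) {p : List A × List A} (hp : p ∈ R) :
    wordProd f p.1 = wordProd f p.2 :=
  (hf.2 _ _).1 (.single ⟨[], p.1, p.2, [], .inl hp, by simp, by simp⟩)

theorem Presents.wordProd_eq_of_wordProd_eq (hf : Presents f R) (g : A → N)
    (hR : ∀ p ∈ R, wordProd g p.1 = wordProd g p.2) {u v : List A}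
    (h : wordProd f u = wordProd f v) : wordProd g u = wordProd g v :=
  wordProd_eq_of_reflTransGen_oneStep g hR ((hf.2 u v).2 h)

end Presentation

section Computability

theorem ComputablePred.comp {α β : Type*} [Primcodable α] [Primcodable β] {p : β → Prop}
    {g : α → β} (hp : ComputablePred p) (hg : Computable g) : ComputablePred fun a => p (g a) :=
  let ⟨_, h⟩ := hp
  ⟨fun _ => inferInstance, h.comp hg⟩

theorem Primrec.list_replicate {α : Type*} [Primcodable α] (a : α) :
    Primrec fun n => List.replicate n a :=
  (Primrec.list_map Primrec.list_range (Primrec.const a).to₂).of_eq fun n => by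
    simp [List.map_const']

theorem primrec_cons_replicate_append {α : Type*} [Primcodable α] (x y z : α) :
    Primrec fun i => x :: (List.replicate i y ++ [z]) :=
  Primrec.list_cons.comp (.const x) (Primrec.list_append.comp (.list_replicate y) (.const [z]))

end Computability

section Invariant

def mxAction (X : Set ℕ) : Fin 5 → Function.End (Option ℕ × Prop)
  | 0 => fun q => (none, q.2 ∨ ∃ k ∈ X, q.1 = some k)
  | 1 => fun q => (q.1.map (· + 1), q.2)
  | 2 => fun q => (some 0, q.2)
  | 3 => fun _ => (none, True)
  | 4 => fun q => (none, q.2)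

variable (X : Set ℕ)

@[simp]
theorem wordProd_mxAction_replicate (i : ℕ) (q : Option ℕ × Prop) :
    wordProd (mxAction X) (List.replicate i 1) q = (q.1.map (· + i), q.2) := by
  induction i generalizing q with
  | zero => simp
  | succ i ih => simp [List.replicate_succ, ih, mxAction, Function.comp_def, add_assoc]

theorem wordProd_mxAction_wABC (i : ℕ) (q : Option ℕ × Prop) :
    wordProd (mxAction X) (wABC i) q = (none, q.2 ∨ i ∈ X) := by
  simp [wABC, mxAction]

theorem wordProd_mxAction_wABD (i : ℕ) (q : Option ℕ × Prop) :
    wordProd (mxAction X) (wABD i) q = (none, True) := by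
  simp [wABD, mxAction]

theorem wordProd_mxAction_wABE (i : ℕ) (q : Option ℕ × Prop) :
    wordProd (mxAction X) (wABE i) q = (none, q.2) := by
  simp [wABE, mxAction]

theorem mxAction_respects_mxRel :
    ∀ p ∈ MXRel X, wordProd (mxAction X) p.1 = wordProd (mxAction X) p.2 := by
  rintro _ ⟨i, ⟨hi, rfl⟩ | ⟨hi, rfl⟩⟩ <;> funext q
  · simp [wordProd_mxAction_wABC, wordProd_mxAction_wABD, hi]
  · simp [wordProd_mxAction_wABC, wordProd_mxAction_wABE, hi]

end Invariant

theorem mem_iff_wordProd_wABC_eq_wordProd_wABD (X : Set ℕ) {M : Type*} [Monoid M]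
    {f : Fin 5 → M} (hpres : Presents f (MXRel X)) (n : ℕ) :
    n ∈ X ↔ wordProd f (wABC n) = wordProd f (wABD n) := by
  refine ⟨fun hn => hpres.wordProd_eq_of_mem ⟨n, .inl ⟨hn, rfl⟩⟩, fun h => ?_⟩
  have hflag := congrArg (· (none, False))
    (hpres.wordProd_eq_of_wordProd_eq (mxAction X) (mxAction_respects_mxRel X) h)
  simpa [wordProd_mxAction_wABC, wordProd_mxAction_wABD] using hflag

/-- For `M(X)` presented by `⟨a,b,c,d,e | a bⁱ c = a bⁱ d (i ∈ X), a bʲ c = a bʲ e (j ∉ X)⟩`: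
`n ∈ X` iff `a bⁿ c = a bⁿ d` holds in `M(X)`; consequently, if the word problem of `M(X)`
is decidable (computable) then `X` is a recursive subset of `ℕ`. -/
theorem stmt_14 (X : Set ℕ) {M : Type} [Monoid M] (f : Fin 5 → M)
    (hpres : Presents f (MXRel X)) :
    (∀ n : ℕ, n ∈ X ↔ wordProd f (wABC n) = wordProd f (wABD n)) ∧
    (ComputablePred
        (fun p : List (Fin 5) × List (Fin 5) => wordProd f p.1 = wordProd f p.2) →
      ComputablePred (fun n : ℕ => n ∈ X)) := by
  have hX := mem_iff_wordProd_wABC_eq_wordProd_wABD X hpres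
  refine ⟨hX, fun hWP => ?_⟩
  have hpair : Computable fun n => (wABC n, wABD n) :=
    ((primrec_cons_replicate_append 0 1 2).pair (primrec_cons_replicate_append 0 1 3)).to_comp
  exact (hWP.comp hpair).of_eq fun n => (hX n).symm
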